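/- arXiv:1507.07648 — 3 statements merged into one kernel-verified Lean document; each statement's English description precedes it below -/
import Mathlib

section
/- If two partial assignments θ and θ' over CNF F assign the same number of variables and yield equal residuals F|θ = F|θ', then the number of models of F extending θ equals the number of models of F extending θ'. -/
abbrev Var := ℕ

abbrev Assg (V : Finset Var) := {x // x ∈ V} → Bool

def extAssg (V : Finset Var) (g : Assg V) : Var → Bool :=
  fun x => if h : x ∈ V then g ⟨x, h⟩ else false

def dependsOn (F : (Var → Bool) → Bool) (V : Finset Var) : Prop :=
  ∀ σ τ : Var → Bool, (∀ x ∈ V, σ x = τ x) → F σ = F τ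

def models (F : (Var → Bool) → Bool) (V : Finset Var) : Finset (Assg V) :=
  Finset.univ.filter (fun g => F (extAssg V g) = true)

def ct (F : (Var → Bool) → Bool) (V : Finset Var) : ℕ := (models F V).card

def restrictAssg {V P : Finset Var} (h : P ⊆ V) (g : Assg V) : Assg P :=
  fun x => g ⟨x.1, h x.2⟩

def projCt (F : (Var → Bool) → Bool) (V P : Finset Var) (h : P ⊆ V) : ℕ :=
  ((models F V).image (restrictAssg h)).card

abbrev Lit := Var × Bool
abbrev Clause := Finset Lit
abbrev CNF := Finset Clause

def clauseSat (σ : Var → Bool) (C : Clause) : Prop := ∃ l ∈ C, σ l.1 = l.2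

instance (σ : Var → Bool) (C : Clause) : Decidable (clauseSat σ C) := by
  unfold clauseSat; infer_instance

def cnfSat (σ : Var → Bool) (F : CNF) : Prop := ∀ C ∈ F, clauseSat σ C

instance (σ : Var → Bool) (F : CNF) : Decidable (cnfSat σ F) := by
  unfold cnfSat; infer_instance

def cnfModels (F : CNF) (V : Finset Var) : Finset (Assg V) :=
  Finset.univ.filter (fun g => cnfSat (extAssg V g) F)

def cnfCt (F : CNF) (V : Finset Var) : ℕ := (cnfModels F V).card

def cnfProjCt (F : CNF) (V P : Finset Var) (h : P ⊆ V) : ℕ :=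
  ((cnfModels F V).image (restrictAssg h)).card

def cnfVars (F : CNF) : Finset Var := F.biUnion (fun C => C.image Prod.fst)

def consistent (θ : Finset Lit) : Prop := ∀ v : Var, ¬((v, true) ∈ θ ∧ (v, false) ∈ θ)

def extendsL (θ : Finset Lit) {V : Finset Var} (g : Assg V) : Prop :=
  ∀ l ∈ θ, extAssg V g l.1 = l.2

instance (θ : Finset Lit) (V : Finset Var) (g : Assg V) : Decidable (extendsL θ g) := by
  unfold extendsL; infer_instance

def negLit (l : Lit) : Lit := (l.1, !l.2)

def residualCNF (F : CNF) (θ : Finset Lit) : CNF :=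
  (F.filter (fun C => ∀ l ∈ C, l ∉ θ)).image (fun C => C.filter (fun l => negLit l ∉ θ))

/-! ### Auxiliary machinery -/

def litVars (θ : Finset Lit) : Finset Var := θ.image Prod.fst

lemma mem_litVars {θ : Finset Lit} {v : Var} : v ∈ litVars θ ↔ ∃ b, (v, b) ∈ θ := by
  simp only [litVars, Finset.mem_image]
  constructor
  · rintro ⟨⟨a, b⟩, h, rfl⟩; exact ⟨b, h⟩
  · rintro ⟨b, h⟩; exact ⟨(v, b), h, rfl⟩

def valOf (θ : Finset Lit) (v : Var) : Bool := decide ((v, true) ∈ θ)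

lemma valOf_eq {θ : Finset Lit} (hc : consistent θ) {v : Var} {b : Bool}
    (h : (v, b) ∈ θ) : valOf θ v = b := by
  cases b
  · simp only [valOf, decide_eq_false_iff_not]
    intro ht; exact hc v ⟨ht, h⟩
  · simp [valOf, h]

lemma card_litVars {θ : Finset Lit} (hc : consistent θ) : (litVars θ).card = θ.card := by
  apply Finset.card_image_of_injOn
  intro l hl m hm hlm
  have h1 : valOf θ l.1 = l.2 := valOf_eq hc (by simpa using hl)
  have h2 : valOf θ m.1 = m.2 := valOf_eq hc (by simpa using hm)
  exact Prod.ext hlm (by rw [← h1, ← h2, hlm])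

lemma extAssg_of_mem {V : Finset Var} (g : Assg V) {x : Var} (h : x ∈ V) :
    extAssg V g x = g ⟨x, h⟩ := dif_pos h

lemma mem_residualCNF {F : CNF} {θ : Finset Lit} {C' : Clause} :
    C' ∈ residualCNF F θ ↔ ∃ C ∈ F, (∀ l ∈ C, l ∉ θ) ∧
      C' = C.filter (fun l => negLit l ∉ θ) := by
  simp only [residualCNF, Finset.mem_image, Finset.mem_filter]
  constructor
  · rintro ⟨C, ⟨hC, hCθ⟩, rfl⟩; exact ⟨C, hC, hCθ, rfl⟩
  · rintro ⟨C, hC, hCθ, rfl⟩; exact ⟨C, ⟨hC, hCθ⟩, rfl⟩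

lemma mem_cnfVars {F : CNF} {v : Var} :
    v ∈ cnfVars F ↔ ∃ C ∈ F, ∃ l ∈ C, l.1 = v := by
  simp [cnfVars, Finset.mem_biUnion, Finset.mem_image]

lemma residual_vars_subset {F : CNF} {θ : Finset Lit} :
    cnfVars (residualCNF F θ) ⊆ cnfVars F := by
  intro v hv
  obtain ⟨C', hC', l, hl, rfl⟩ := mem_cnfVars.1 hv
  obtain ⟨C, hC, hCθ, rfl⟩ := mem_residualCNF.1 hC'
  exact mem_cnfVars.2 ⟨C, hC, l, (Finset.mem_filter.1 hl).1, rfl⟩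

lemma residual_vars_not_mem {F : CNF} {θ : Finset Lit} {v : Var}
    (hv : v ∈ cnfVars (residualCNF F θ)) : v ∉ litVars θ := by
  obtain ⟨C', hC', l, hl, rfl⟩ := mem_cnfVars.1 hv
  obtain ⟨C, hC, hCθ, rfl⟩ := mem_residualCNF.1 hC'
  obtain ⟨hlC, hneg⟩ := Finset.mem_filter.1 hl
  intro hmem
  obtain ⟨b, hb⟩ := mem_litVars.1 hmem
  by_cases hbe : b = l.2
  · exact hCθ l hlC (by rw [← Prod.mk.eta (p := l), ← hbe]; exact hb)
  · have : b = !l.2 := by cases b <;> cases h2 : l.2 <;> simp_all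
    exact hneg (by rw [negLit, ← this]; exact hb)

lemma cnfSat_congr {G : CNF} {σ τ : Var → Bool}
    (h : ∀ x ∈ cnfVars G, σ x = τ x) (hs : cnfSat σ G) : cnfSat τ G := by
  intro C hC
  obtain ⟨l, hl, hσ⟩ := hs C hC
  refine ⟨l, hl, ?_⟩
  rw [← h l.1 (mem_cnfVars.2 ⟨C, hC, l, hl, rfl⟩)]
  exact hσ

lemma sat_residual_iff {F : CNF} {θ : Finset Lit} {V : Finset Var} {g : Assg V}
    (hg : extendsL θ g) :
    cnfSat (extAssg V g) F ↔ cnfSat (extAssg V g) (residualCNF F θ) := by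
  constructor
  · intro hs C' hC'
    obtain ⟨C, hC, hCθ, rfl⟩ := mem_residualCNF.1 hC'
    obtain ⟨l, hl, hσ⟩ := hs C hC
    refine ⟨l, Finset.mem_filter.2 ⟨hl, ?_⟩, hσ⟩
    intro hneg
    have := hg (negLit l) hneg
    simp only [negLit] at this
    rw [hσ] at this
    simp at this
  · intro hs C hC
    by_cases hex : ∃ l ∈ C, l ∈ θ
    · obtain ⟨l, hl, hlθ⟩ := hex
      exact ⟨l, hl, hg l hlθ⟩
    · push_neg at hex
      have hmem : C.filter (fun l => negLit l ∉ θ) ∈ residualCNF F θ :=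
        mem_residualCNF.2 ⟨C, hC, hex, rfl⟩
      obtain ⟨l, hl, hσ⟩ := hs _ hmem
      exact ⟨l, (Finset.mem_filter.1 hl).1, hσ⟩

def transfer (V T T' : Finset Var) (hT' : T' ⊆ V)
    (e : {x // x ∈ T \ T'} ≃ {x // x ∈ T' \ T}) (val' : Var → Bool)
    (g : Assg V) : Assg V :=
  fun x => if hx' : x.1 ∈ T' then val' x.1
    else if hx : x.1 ∈ T then
      g ⟨(e ⟨x.1, Finset.mem_sdiff.2 ⟨hx, hx'⟩⟩ : {x // x ∈ T' \ T}).1,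
        hT' (Finset.mem_sdiff.1 (e ⟨x.1, Finset.mem_sdiff.2 ⟨hx, hx'⟩⟩).2).1⟩
    else g x

lemma transfer_apply_mem' {V T T' : Finset Var} (hT' : T' ⊆ V)
    (e : {x // x ∈ T \ T'} ≃ {x // x ∈ T' \ T}) (val' : Var → Bool)
    (g : Assg V) {x : {x // x ∈ V}} (hx' : x.1 ∈ T') :
    transfer V T T' hT' e val' g x = val' x.1 := dif_pos hx'

lemma transfer_apply_mem {V T T' : Finset Var} (hT' : T' ⊆ V)
    (e : {x // x ∈ T \ T'} ≃ {x // x ∈ T' \ T}) (val' : Var → Bool)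
    (g : Assg V) {x : {x // x ∈ V}} (hx' : x.1 ∉ T') (hx : x.1 ∈ T) :
    transfer V T T' hT' e val' g x =
      g ⟨(e ⟨x.1, Finset.mem_sdiff.2 ⟨hx, hx'⟩⟩ : {x // x ∈ T' \ T}).1,
        hT' (Finset.mem_sdiff.1 (e ⟨x.1, Finset.mem_sdiff.2 ⟨hx, hx'⟩⟩).2).1⟩ := by
  rw [transfer, dif_neg hx', dif_pos hx]

lemma transfer_apply_other {V T T' : Finset Var} (hT' : T' ⊆ V)
    (e : {x // x ∈ T \ T'} ≃ {x // x ∈ T' \ T}) (val' : Var → Bool)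
    (g : Assg V) {x : {x // x ∈ V}} (hx' : x.1 ∉ T') (hx : x.1 ∉ T) :
    transfer V T T' hT' e val' g x = g x := by
  rw [transfer, dif_neg hx', dif_neg hx]

lemma transfer_inv {V T T' : Finset Var} (hT : T ⊆ V) (hT' : T' ⊆ V)
    (e : {x // x ∈ T \ T'} ≃ {x // x ∈ T' \ T}) (val val' : Var → Bool)
    (g : Assg V) (hval : ∀ x : {x // x ∈ V}, x.1 ∈ T → g x = val x.1) :
    transfer V T' T hT e.symm val (transfer V T T' hT' e val' g) = g := by
  funext x
  by_cases h1 : x.1 ∈ T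
  · rw [transfer_apply_mem' hT e.symm val _ h1]
    exact (hval x h1).symm
  · by_cases h2 : x.1 ∈ T'
    · rw [transfer_apply_mem hT e.symm val _ h1 h2]
      set z : {x // x ∈ T' \ T} := ⟨x.1, Finset.mem_sdiff.2 ⟨h2, h1⟩⟩ with hz
      have hy := (e.symm z).2
      have hyT : (e.symm z).1 ∈ T := (Finset.mem_sdiff.1 hy).1
      have hyT' : (e.symm z).1 ∉ T' := (Finset.mem_sdiff.1 hy).2
      rw [transfer_apply_mem hT' e val' g hyT' hyT]
      have heq : (⟨(e.symm z).1, Finset.mem_sdiff.2 ⟨hyT, hyT'⟩⟩ :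
          {x // x ∈ T \ T'}) = e.symm z := Subtype.ext rfl
      have h4 : ((e ⟨(e.symm z).1, Finset.mem_sdiff.2 ⟨hyT, hyT'⟩⟩ :
          {x // x ∈ T' \ T}) : Var) = x.1 := by
        rw [heq, Equiv.apply_symm_apply]
      exact congrArg g (Subtype.ext h4)
    · rw [transfer_apply_other hT e.symm val _ h1 h2,
        transfer_apply_other hT' e val' g h2 h1]

theorem stmt8 (F : CNF) (V : Finset Var) (θ θ' : Finset Lit)
    (hFV : cnfVars F ⊆ V)
    (hθV : ∀ l ∈ θ, l.1 ∈ V) (hθ'V : ∀ l ∈ θ', l.1 ∈ V)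
    (hc : consistent θ) (hc' : consistent θ')
    (hcard : θ.card = θ'.card) (hres : residualCNF F θ = residualCNF F θ') :
    (Finset.univ.filter
      (fun g : Assg V => extendsL θ g ∧ cnfSat (extAssg V g) F)).card =
    (Finset.univ.filter
      (fun g : Assg V => extendsL θ' g ∧ cnfSat (extAssg V g) F)).card := by
  classical
  set T := litVars θ with hTdef
  set T' := litVars θ' with hT'def
  have hT : T ⊆ V := by
    intro v hv; obtain ⟨b, hb⟩ := mem_litVars.1 hv; exact hθV (v, b) hb
  have hT' : T' ⊆ V := by
    intro v hv; obtain ⟨b, hb⟩ := mem_litVars.1 hv; exact hθ'V (v, b) hb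
  have hcards : T.card = T'.card := by
    rw [hTdef, hT'def, card_litVars hc, card_litVars hc', hcard]
  have hsd : (T \ T').card = (T' \ T).card := Finset.card_sdiff_comm hcards
  obtain e := Finset.equivOfCardEq hsd
  -- key facts about residual variables
  have hRV : ∀ x ∈ cnfVars (residualCNF F θ), x ∈ V ∧ x ∉ T ∧ x ∉ T' := by
    intro x hx
    refine ⟨hFV (residual_vars_subset hx), residual_vars_not_mem hx, ?_⟩
    rw [hres] at hx
    exact residual_vars_not_mem hx
  -- generic step: transfer maps one side into the other
  have key : ∀ (g : Assg V), extendsL θ g → cnfSat (extAssg V g) F →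
      extendsL θ' (transfer V T T' hT' e (valOf θ') g) ∧
      cnfSat (extAssg V (transfer V T T' hT' e (valOf θ') g)) F := by
    intro g hgθ hgF
    set g' := transfer V T T' hT' e (valOf θ') g with hg'
    have hext : extendsL θ' g' := by
      intro l hl
      have hlV : l.1 ∈ V := hθ'V l hl
      have hlT' : l.1 ∈ T' := mem_litVars.2 ⟨l.2, by simpa using hl⟩
      rw [extAssg_of_mem g' hlV, hg', transfer_apply_mem' hT' e (valOf θ') g hlT']
      exact valOf_eq hc' (by simpa using hl)
    refine ⟨hext, ?_⟩
    have hagree : ∀ x ∈ cnfVars (residualCNF F θ),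
        extAssg V g x = extAssg V g' x := by
      intro x hx
      obtain ⟨hxV, hxT, hxT'⟩ := hRV x hx
      rw [extAssg_of_mem g hxV, extAssg_of_mem g' hxV, hg',
        transfer_apply_other hT' e (valOf θ') g hxT' hxT]
    have hsatR : cnfSat (extAssg V g') (residualCNF F θ) :=
      cnfSat_congr hagree ((sat_residual_iff hgθ).1 hgF)
    rw [hres] at hsatR
    exact (sat_residual_iff hext).2 hsatR
  have key' : ∀ (g : Assg V), extendsL θ' g → cnfSat (extAssg V g) F →
      extendsL θ (transfer V T' T hT e.symm (valOf θ) g) ∧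
      cnfSat (extAssg V (transfer V T' T hT e.symm (valOf θ) g)) F := by
    intro g hgθ hgF
    set g' := transfer V T' T hT e.symm (valOf θ) g with hg'
    have hext : extendsL θ g' := by
      intro l hl
      have hlV : l.1 ∈ V := hθV l hl
      have hlT : l.1 ∈ T := mem_litVars.2 ⟨l.2, by simpa using hl⟩
      rw [extAssg_of_mem g' hlV, hg', transfer_apply_mem' hT e.symm (valOf θ) g hlT]
      exact valOf_eq hc (by simpa using hl)
    refine ⟨hext, ?_⟩
    have hagree : ∀ x ∈ cnfVars (residualCNF F θ'),
        extAssg V g x = extAssg V g' x := by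
      intro x hx
      rw [← hres] at hx
      obtain ⟨hxV, hxT, hxT'⟩ := hRV x hx
      rw [extAssg_of_mem g hxV, extAssg_of_mem g' hxV, hg',
        transfer_apply_other hT e.symm (valOf θ) g hxT hxT']
    have hsatR : cnfSat (extAssg V g') (residualCNF F θ') :=
      cnfSat_congr hagree ((sat_residual_iff hgθ).1 hgF)
    rw [← hres] at hsatR
    exact (sat_residual_iff hext).2 hsatR
  apply Finset.card_bij'
    (i := fun g _ => transfer V T T' hT' e (valOf θ') g)
    (j := fun g _ => transfer V T' T hT e.symm (valOf θ) g)
  · intro g hg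
    rw [Finset.mem_filter] at hg ⊢
    exact ⟨Finset.mem_univ _, key g hg.2.1 hg.2.2⟩
  · intro g hg
    rw [Finset.mem_filter] at hg ⊢
    exact ⟨Finset.mem_univ _, key' g hg.2.1 hg.2.2⟩
  · intro g hg
    rw [Finset.mem_filter] at hg
    apply transfer_inv hT hT' e (valOf θ) (valOf θ') g
    intro x hx
    obtain ⟨b, hb⟩ := mem_litVars.1 hx
    have := hg.2.1 (x.1, b) hb
    rw [extAssg_of_mem g x.2] at this
    rw [valOf_eq hc hb]
    exact this
  · intro g hg
    rw [Finset.mem_filter] at hg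
    have := transfer_inv hT' hT e.symm (valOf θ') (valOf θ) g (by
      intro x hx
      obtain ⟨b, hb⟩ := mem_litVars.1 hx
      have := hg.2.1 (x.1, b) hb
      rw [extAssg_of_mem g x.2] at this
      rw [valOf_eq hc' hb]
      exact this)
    rwa [Equiv.symm_symm] at this
end

section
/- For a d-DNNF circuit D over n variables, the model count of D equals 2^n times the value obtained by replacing every literal leaf by 1/2, every OR node by addition, and every AND node by multiplication. -/
inductive NNF where
  | tru : NNF
  | lit : Var → Bool → NNF
  | and : NNF → NNF → NNF
  | or : NNF → NNF → NNF

def NNF.vars : NNF → Finset Var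
  | .tru => ∅
  | .lit v _ => {v}
  | .and a b => a.vars ∪ b.vars
  | .or a b => a.vars ∪ b.vars

def NNF.sat : NNF → (Var → Bool) → Bool
  | .tru, _ => true
  | .lit v b, σ => σ v == b
  | .and a b, σ => a.sat σ && b.sat σ
  | .or a b, σ => a.sat σ || b.sat σ

def NNF.decomposable : NNF → Prop
  | .tru => True
  | .lit _ _ => True
  | .and a b => a.decomposable ∧ b.decomposable ∧ Disjoint a.vars b.vars
  | .or a b => a.decomposable ∧ b.decomposable

def NNF.dDNNF : NNF → Prop
  | .tru => True
  | .lit _ _ => True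
  | .and a b => a.dDNNF ∧ b.dDNNF ∧ Disjoint a.vars b.vars
  | .or a b => a.dDNNF ∧ b.dDNNF ∧ ∀ σ, ¬(a.sat σ = true ∧ b.sat σ = true)

def NNF.wval : NNF → ℚ
  | .tru => 1
  | .lit _ _ => 1/2
  | .and a b => a.wval * b.wval
  | .or a b => a.wval + b.wval

def NNF.forget (N : Finset Var) : NNF → NNF
  | .tru => .tru
  | .lit v b => if v ∈ N then .tru else .lit v b
  | .and a b => .and (a.forget N) (b.forget N)
  | .or a b => .or (a.forget N) (b.forget N)

def nnfCt (D : NNF) (V : Finset Var) : ℕ :=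
  (Finset.univ.filter (fun g : Assg V => D.sat (extAssg V g) = true)).card


lemma sat_congr (D : NNF) (σ τ : Var → Bool) (h : ∀ x ∈ D.vars, σ x = τ x) :
    D.sat σ = D.sat τ := by
  induction D with
  | tru => rfl
  | lit v b => simp [NNF.sat, h v (by simp [NNF.vars])]
  | and a b ha hb =>
    simp only [NNF.sat]
    rw [ha (fun x hx => h x (by simp [NNF.vars, hx])),
        hb (fun x hx => h x (by simp [NNF.vars, hx]))]
  | or a b ha hb =>
    simp only [NNF.sat]
    rw [ha (fun x hx => h x (by simp [NNF.vars, hx])),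
        hb (fun x hx => h x (by simp [NNF.vars, hx]))]

lemma ext_restrict {P V : Finset Var} (hPV : P ⊆ V) (g : Assg V) (x : Var) (hx : x ∈ P) :
    extAssg P (restrictAssg hPV g) x = extAssg V g x := by
  simp [extAssg, restrictAssg, hx, hPV hx]

lemma sat_restrict (D : NNF) {P V : Finset Var} (hPV : P ⊆ V) (hDP : D.vars ⊆ P)
    (g : Assg V) : D.sat (extAssg P (restrictAssg hPV g)) = D.sat (extAssg V g) :=
  sat_congr D _ _ (fun x hx => ext_restrict hPV g x (hDP hx))

def splitEquiv (S T : Finset Var) (hd : Disjoint S T) : Assg (S ∪ T) ≃ Assg S × Assg T where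
  toFun g := (fun x => g ⟨x.1, Finset.mem_union_left _ x.2⟩,
              fun x => g ⟨x.1, Finset.mem_union_right _ x.2⟩)
  invFun p := fun x => if h : x.1 ∈ S then p.1 ⟨x.1, h⟩ else
      p.2 ⟨x.1, by rcases Finset.mem_union.mp x.2 with h' | h'; exact absurd h' h; exact h'⟩
  left_inv g := by
    funext x
    by_cases h : x.1 ∈ S <;> simp [h]
  right_inv p := by
    refine Prod.ext ?_ ?_
    · funext x; simp [x.2]
    · funext x; simp [Finset.disjoint_right.mp hd x.2]

lemma sum_split (S T : Finset Var) (hd : Disjoint S T) (φ : Assg S → ℚ) (ψ : Assg T → ℚ) :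
    ∑ g : Assg (S ∪ T), φ (restrictAssg Finset.subset_union_left g)
        * ψ (restrictAssg Finset.subset_union_right g)
      = (∑ a : Assg S, φ a) * (∑ b : Assg T, ψ b) := by
  have h1 : (∑ g : Assg (S ∪ T), φ (restrictAssg Finset.subset_union_left g)
        * ψ (restrictAssg Finset.subset_union_right g))
      = ∑ p : Assg S × Assg T, φ p.1 * ψ p.2 :=
    Equiv.sum_comp (splitEquiv S T hd) (fun p => φ p.1 * ψ p.2)
  rw [h1, Fintype.sum_prod_type]
  exact (Finset.sum_mul_sum _ _ _ _).symm

lemma nnfCt_eq_sum (D : NNF) (V : Finset Var) :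
    (nnfCt D V : ℚ) = ∑ g : Assg V, if D.sat (extAssg V g) = true then 1 else 0 := by
  rw [Finset.sum_boole, nnfCt]

lemma card_assg (V : Finset Var) : Fintype.card (Assg V) = 2 ^ V.card := by
  rw [Fintype.card_fun, Fintype.card_coe, Fintype.card_bool]

def singleEquiv (v : Var) : Assg {v} ≃ Bool where
  toFun a := a ⟨v, Finset.mem_singleton_self v⟩
  invFun c := fun _ => c
  left_inv a := by
    funext x
    have : x = ⟨v, Finset.mem_singleton_self v⟩ := Subtype.ext (Finset.mem_singleton.mp x.2)
    rw [this]
  right_inv c := rfl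


theorem stmt11 (D : NNF) (V : Finset Var) (hD : D.dDNNF) (hV : D.vars ⊆ V) :
    (nnfCt D V : ℚ) = 2 ^ V.card * D.wval := by
  induction D generalizing V with
  | tru =>
    rw [nnfCt_eq_sum]
    simp only [NNF.sat, if_pos rfl, Finset.sum_const, Finset.card_univ, card_assg,
      nsmul_eq_mul, mul_one, NNF.wval]
    push_cast
    ring
  | lit v b =>
    have hv : v ∈ V := hV (by simp [NNF.vars])
    have hcup : ({v} : Finset Var) ∪ (V \ {v}) = V :=
      Finset.union_sdiff_of_subset (Finset.singleton_subset_iff.mpr hv)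
    have hd : Disjoint ({v} : Finset Var) (V \ {v}) := Finset.disjoint_sdiff
    rw [nnfCt_eq_sum, ← hcup]
    have key : ∀ g : Assg ({v} ∪ (V \ {v})),
        (if (NNF.lit v b).sat (extAssg _ g) = true then (1:ℚ) else 0)
        = (if (NNF.lit v b).sat (extAssg {v} (restrictAssg Finset.subset_union_left g)) = true
              then (1:ℚ) else 0)
          * (1 : ℚ) := by
      intro g
      rw [sat_restrict (NNF.lit v b) Finset.subset_union_left (by simp [NNF.vars]) g, mul_one]
    have hsum : (∑ g : Assg ({v} ∪ (V \ {v})),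
        if (NNF.lit v b).sat (extAssg _ g) = true then (1:ℚ) else 0)
        = (∑ a : Assg {v},
            if (NNF.lit v b).sat (extAssg {v} a) = true then (1:ℚ) else 0)
          * (∑ _b : Assg (V \ {v}), (1:ℚ)) := by
      rw [Finset.sum_congr rfl (fun g _ => key g)]
      exact sum_split _ _ hd
        (fun a' => if (NNF.lit v b).sat (extAssg {v} a') = true then (1:ℚ) else 0)
        (fun _ => (1:ℚ))
    rw [hsum]
    have h1 : (∑ a : Assg {v},
        if (NNF.lit v b).sat (extAssg {v} a) = true then (1:ℚ) else 0) = 1 := by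
      rw [← Equiv.sum_comp (singleEquiv v).symm]
      simp only [singleEquiv, Equiv.coe_fn_symm_mk, NNF.sat, extAssg]
      rw [Fintype.sum_bool]
      cases b <;> simp
    rw [h1, one_mul, Finset.sum_const, Finset.card_univ, card_assg, nsmul_eq_mul, mul_one,
      Finset.card_union_of_disjoint hd, NNF.wval]
    push_cast
    rw [pow_add]
    simp
    ring
  | and a b iha ihb =>
    obtain ⟨hDa, hDb, hdis⟩ := hD
    have hSV : a.vars ⊆ V := fun x hx => hV (by simp [NNF.vars, hx])
    have hbV : b.vars ⊆ V := fun x hx => hV (by simp [NNF.vars, hx])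
    have hcup : a.vars ∪ (V \ a.vars) = V := Finset.union_sdiff_of_subset hSV
    have hd : Disjoint a.vars (V \ a.vars) := Finset.disjoint_sdiff
    have hbT : b.vars ⊆ V \ a.vars := fun x hx =>
      Finset.mem_sdiff.mpr ⟨hbV hx, fun hxa => Finset.disjoint_left.mp hdis hxa hx⟩
    rw [nnfCt_eq_sum, ← hcup]
    have key : ∀ g : Assg (a.vars ∪ (V \ a.vars)),
        (if (NNF.and a b).sat (extAssg _ g) = true then (1:ℚ) else 0)
        = (if a.sat (extAssg a.vars (restrictAssg Finset.subset_union_left g)) = true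
              then (1:ℚ) else 0)
          * (if b.sat (extAssg (V \ a.vars) (restrictAssg Finset.subset_union_right g)) = true
              then (1:ℚ) else 0) := by
      intro g
      rw [sat_restrict a Finset.subset_union_left (le_refl _) g,
        sat_restrict b Finset.subset_union_right hbT g]
      simp only [NNF.sat, Bool.and_eq_true]
      by_cases h1 : a.sat (extAssg _ g) = true <;>
        by_cases h2 : b.sat (extAssg _ g) = true <;> simp [h1, h2]
    have hsum : (∑ g : Assg (a.vars ∪ (V \ a.vars)),
        if (NNF.and a b).sat (extAssg _ g) = true then (1:ℚ) else 0)
        = (∑ a' : Assg a.vars, if a.sat (extAssg a.vars a') = true then (1:ℚ) else 0)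
          * (∑ b' : Assg (V \ a.vars),
              if b.sat (extAssg (V \ a.vars) b') = true then (1:ℚ) else 0) := by
      rw [Finset.sum_congr rfl (fun g _ => key g)]
      exact sum_split _ _ hd
        (fun a' => if a.sat (extAssg a.vars a') = true then (1:ℚ) else 0)
        (fun b' => if b.sat (extAssg (V \ a.vars) b') = true then (1:ℚ) else 0)
    rw [hsum, ← nnfCt_eq_sum, ← nnfCt_eq_sum, iha _ hDa (le_refl _), ihb _ hDb hbT,
      Finset.card_union_of_disjoint hd, NNF.wval, pow_add]
    ring
  | or a b iha ihb =>
    obtain ⟨hDa, hDb, hdet⟩ := hD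
    have hSV : a.vars ⊆ V := fun x hx => hV (by simp [NNF.vars, hx])
    have hbV : b.vars ⊆ V := fun x hx => hV (by simp [NNF.vars, hx])
    rw [nnfCt_eq_sum]
    have key : ∀ g : Assg V,
        (if (NNF.or a b).sat (extAssg V g) = true then (1:ℚ) else 0)
        = (if a.sat (extAssg V g) = true then (1:ℚ) else 0)
          + (if b.sat (extAssg V g) = true then (1:ℚ) else 0) := by
      intro g
      have := hdet (extAssg V g)
      simp only [NNF.sat, Bool.or_eq_true]
      by_cases h1 : a.sat (extAssg V g) = true <;>
        by_cases h2 : b.sat (extAssg V g) = true <;> simp_all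
    rw [Finset.sum_congr rfl (fun g _ => key g), Finset.sum_add_distrib,
      ← nnfCt_eq_sum, ← nnfCt_eq_sum, iha _ hDa hSV, ihb _ hDb hbV, NNF.wval]
    ring
end

section
/- Let D be a DNNF over V and N ⊆ V. The formula obtained from D by replacing every literal over a variable in N with true is logically equivalent to the existential quantification of D over N, restricted to variables V \ N: an assignment over V \ N satisfies the replaced formula iff it has an extension to V satisfying D. -/
/-!
Induction on the circuit. Forgetting commutes with `∨` for every formula, and with `∧`
when the conjuncts share no variable: witnesses for the two conjuncts, each agreeing with `σ` off
`N`, can then be glued along `a.vars` into one witness for the conjunction.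
-/

namespace NNF

theorem sat_congr {D : NNF} {σ τ : Var → Bool} (h : ∀ x ∈ D.vars, σ x = τ x) :
    D.sat σ = D.sat τ := by
  induction D with
  | tru => rfl
  | lit v b => simp [sat, h v (by simp [vars])]
  | and a b iha ihb | or a b iha ihb =>
    simp only [sat]
    rw [iha fun x hx => h x (by simp [vars, hx]), ihb fun x hx => h x (by simp [vars, hx])]

theorem exists_sat_and_of_disjoint {a b : NNF} (hab : Disjoint a.vars b.vars)
    {N : Finset Var} {σ : Var → Bool}
    (ha : ∃ τ : Var → Bool, (∀ x, x ∉ N → τ x = σ x) ∧ a.sat τ = true)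
    (hb : ∃ τ : Var → Bool, (∀ x, x ∉ N → τ x = σ x) ∧ b.sat τ = true) :
    ∃ τ : Var → Bool, (∀ x, x ∉ N → τ x = σ x) ∧ a.sat τ = true ∧ b.sat τ = true := by
  obtain ⟨τa, hτa, ha⟩ := ha
  obtain ⟨τb, hτb, hb⟩ := hb
  refine ⟨a.vars.piecewise τa τb, fun x hx => ?_, ?_⟩
  · by_cases hxa : x ∈ a.vars
    · rw [Finset.piecewise_eq_of_mem _ _ _ hxa, hτa x hx]
    · rw [Finset.piecewise_eq_of_notMem _ _ _ hxa, hτb x hx]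
  · have sat_a : a.sat (a.vars.piecewise τa τb) = a.sat τa :=
      sat_congr fun x hx => Finset.piecewise_eq_of_mem _ _ _ hx
    have sat_b : b.sat (a.vars.piecewise τa τb) = b.sat τb :=
      sat_congr fun x hx =>
        Finset.piecewise_eq_of_notMem _ _ _ (hab.notMem_of_mem_right_finset hx)
    exact ⟨sat_a ▸ ha, sat_b ▸ hb⟩

theorem sat_forget_lit_iff (N : Finset Var) (v : Var) (b : Bool) (σ : Var → Bool) :
    ((lit v b).forget N).sat σ = true ↔
      ∃ τ : Var → Bool, (∀ x, x ∉ N → τ x = σ x) ∧ (lit v b).sat τ = true := by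
  by_cases hv : v ∈ N
  · simp only [forget, hv, if_true, sat, true_iff]
    refine ⟨Function.update σ v b, fun x hx => Function.update_of_ne ?_ _ _, by simp⟩
    rintro rfl
    exact hx hv
  · simp only [forget, hv, if_false]
    exact ⟨fun h => ⟨σ, fun _ _ => rfl, h⟩, fun ⟨τ, hτ, h⟩ => by simpa [sat, hτ v hv] using h⟩

end NNF

theorem stmt14 (D : NNF) (N : Finset Var) (hD : D.decomposable) (σ : Var → Bool) :
    (D.forget N).sat σ = true ↔
      ∃ τ : Var → Bool, (∀ x, x ∉ N → τ x = σ x) ∧ D.sat τ = true := by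
  induction D generalizing σ with
  | tru => exact ⟨fun _ => ⟨σ, fun _ _ => rfl, rfl⟩, fun _ => rfl⟩
  | lit v b => exact NNF.sat_forget_lit_iff N v b σ
  | and a b iha ihb =>
    obtain ⟨ha, hb, hab⟩ := hD
    simp only [NNF.forget, NNF.sat, Bool.and_eq_true, iha ha, ihb hb]
    refine ⟨fun ⟨hτa, hτb⟩ => NNF.exists_sat_and_of_disjoint hab hτa hτb, ?_⟩
    rintro ⟨τ, hτ, hsat_a, hsat_b⟩
    exact ⟨⟨τ, hτ, hsat_a⟩, ⟨τ, hτ, hsat_b⟩⟩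
  | or a b iha ihb =>
    obtain ⟨ha, hb⟩ := hD
    simp only [NNF.forget, NNF.sat, Bool.or_eq_true, iha ha, ihb hb, ← exists_or, and_or_left]
end
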